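/- arXiv:1011.1429 — 10 statements merged into one kernel-verified Lean document; each statement's English description precedes it below -/
import Mathlib

section
/- Let $L_0$ be the Dunkl-type operator $L_0 f(x) = g_0(x)(f(-x)-f(x)) - g_1(x)f'(-x)$ with $g_0, g_1$ as above. Then $L_0$ maps the space of polynomials of degree at most $n$ into itself, for every natural number $n$. -/
open Polynomial

/-- The Dunkl-type operator `L₀` preserves the space of polynomials of degree at most `n`:
for every polynomial `p` with `deg p ≤ n` there is a polynomial `q` with `deg q ≤ n` such that
`L₀ p (x) = q(x)` for all `x ≠ 0`. -/
theorem L0_preserves_degree (α β c : ℝ) (n : ℕ) (p : Polynomial ℝ)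
    (hp : p.natDegree ≤ n) :
    ∃ q : Polynomial ℝ, q.natDegree ≤ n ∧ ∀ x : ℝ, x ≠ 0 →
      (((α + β + 1) * x ^ 2 + (c * α - β) * x + c) / x ^ 2) * (p.eval (-x) - p.eval x)
        - (2 * (x - 1) * (x + c) / x) * deriv (fun t : ℝ => p.eval t) (-x)
        = q.eval x := by
  set A : Polynomial ℝ := C (α + β + 1) * X ^ 2 + C (c * α - β) * X + C c with hA
  set N : Polynomial ℝ :=
    A * (p.comp (-X) - p) - C 2 * X * (X - 1) * (X + C c) * (p.derivative.comp (-X)) with hN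
  -- degree bound on N
  have hcompdeg : (p.comp (-X : ℝ[X])).natDegree ≤ n := by
    refine natDegree_comp_le.trans ?_
    calc p.natDegree * (-X : ℝ[X]).natDegree ≤ n * 1 :=
          Nat.mul_le_mul hp (by simp)
      _ = n := by ring
  have hNdeg : N.natDegree ≤ n + 2 := by
    refine (natDegree_sub_le _ _).trans (max_le ?_ ?_)
    · refine natDegree_mul_le.trans ?_
      have h1 : A.natDegree ≤ 2 := by rw [hA]; compute_degree
      have h2 : (p.comp (-X) - p).natDegree ≤ n :=
        (natDegree_sub_le _ _).trans (max_le hcompdeg hp)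
      omega
    · rcases eq_or_ne p.derivative 0 with h | h
      · simp [h]
      · refine natDegree_mul_le.trans ?_
        have h1 : (C (2:ℝ) * X * (X - 1) * (X + C c)).natDegree ≤ 3 := by compute_degree
        have h2 : (p.derivative.comp (-X : ℝ[X])).natDegree ≤ n - 1 := by
          refine natDegree_comp_le.trans ?_
          have := p.natDegree_derivative_le
          calc p.derivative.natDegree * (-X : ℝ[X]).natDegree
              ≤ (n - 1) * 1 := Nat.mul_le_mul (by omega) (by simp)
            _ = n - 1 := by ring
        have h3 : p.derivative ≠ 0 := h
        have hn1 : 1 ≤ n := by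
          by_contra hn
          have : p.natDegree = 0 := by omega
          exact h (by rw [eq_C_of_natDegree_eq_zero this]; simp)
        omega
  -- divisibility by X^2
  have h0 : N.eval 0 = 0 := by simp [hN, hA]
  have hX : (X : ℝ[X]) ∣ N := by
    rw [X_dvd_iff, coeff_zero_eq_eval_zero]; exact h0
  obtain ⟨M, hM⟩ := hX
  have hN'0 : (derivative N).eval 0 = 0 := by
    simp [hN, hA, derivative_mul, derivative_comp]
    ring
  have hM0 : M.eval 0 = 0 := by
    have hder := congrArg (fun r => (derivative r).eval 0) hM
    simp [derivative_mul] at hder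
    rw [hder] at hN'0
    simpa using hN'0
  have hXM : (X : ℝ[X]) ∣ M := by
    rw [X_dvd_iff, coeff_zero_eq_eval_zero]; exact hM0
  obtain ⟨q, hq⟩ := hXM
  have hNq : N = X ^ 2 * q := by rw [hM, hq]; ring
  refine ⟨q, ?_, ?_⟩
  · rcases eq_or_ne q 0 with rfl | hq0
    · simp
    · have : N.natDegree = 2 + q.natDegree := by
        rw [hNq, natDegree_mul (pow_ne_zero 2 X_ne_zero) hq0]
        simp
      omega
  · intro x hx
    have hder : deriv (fun t : ℝ => p.eval t) (-x) = p.derivative.eval (-x) :=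
      Polynomial.deriv p
    have hNe : N.eval x = ((α + β + 1) * x ^ 2 + (c * α - β) * x + c) * (p.eval (-x) - p.eval x)
        - 2 * x * (x - 1) * (x + c) * (p.derivative.eval (-x)) := by
      simp [hN, hA]
    have hNe2 : N.eval x = x ^ 2 * q.eval x := by rw [hNq]; simp
    rw [hder]
    field_simp
    linear_combination hNe2 - hNe
end

section
/- Let $(v_n)_{n\geq 1}$ be real numbers and $\nu$ a real number. Define polynomials $R_n$ by $R_0 = 1$, $R_1(x) = x - \nu$, and $R_{n+1}(x) = (x - (-1)^n \nu) R_n(x) - v_n R_{n-1}(x)$. Then there exist monic polynomials $P_n$ and $Q_n$ of degree $n$ such that $R_{2n}(x) = P_n(x^2)$ and $R_{2n+1}(x) = (x-\nu)Q_n(x^2)$ for all $n$. -/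
open Polynomial

noncomputable def PQaux (ν : ℝ) (v : ℕ → ℝ) : ℕ → Polynomial ℝ × Polynomial ℝ
  | 0 => (1, 1)
  | n+1 =>
    let pq := PQaux ν v n
    let p' := (X - C (ν^2)) * pq.2 - C (v (2*n+1)) * pq.1
    (p', p' - C (v (2*n+2)) * pq.2)

lemma monic_sub_aux {p q : Polynomial ℝ} (hp : p.Monic) (h : q.natDegree < p.natDegree) :
    (p - q).Monic ∧ (p - q).natDegree = p.natDegree := by
  have hd : (p - q).natDegree = p.natDegree :=
    natDegree_sub_eq_left_of_natDegree_lt h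
  refine ⟨?_, hd⟩
  unfold Monic
  rw [leadingCoeff, hd, coeff_sub, coeff_eq_zero_of_natDegree_lt h, sub_zero]
  exact hp

/-- Quadratic mapping decomposition: the polynomials `Rₙ` defined by the recurrence
`R_{n+1}(x) = (x - (-1)ⁿ ν) Rₙ(x) - vₙ R_{n-1}(x)` split as `R_{2n}(x) = Pₙ(x²)` and
`R_{2n+1}(x) = (x-ν) Qₙ(x²)` with `Pₙ, Qₙ` monic of degree `n`. -/
theorem quadratic_mapping_decomposition (ν : ℝ) (v : ℕ → ℝ) (R : ℕ → Polynomial ℝ)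
    (hR0 : R 0 = 1) (hR1 : R 1 = X - C ν)
    (hRrec : ∀ n : ℕ, 1 ≤ n →
      R (n + 1) = (X - C ((-1 : ℝ) ^ n * ν)) * R n - C (v n) * R (n - 1)) :
    ∃ P Q : ℕ → Polynomial ℝ,
      (∀ n : ℕ, (P n).Monic ∧ (P n).natDegree = n ∧ (Q n).Monic ∧ (Q n).natDegree = n ∧
        R (2 * n) = (P n).comp (X ^ 2) ∧
        R (2 * n + 1) = (X - C ν) * (Q n).comp (X ^ 2)) := by
  refine ⟨fun n => (PQaux ν v n).1, fun n => (PQaux ν v n).2, ?_⟩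
  have key : ∀ n : ℕ, ((PQaux ν v n).1).Monic ∧ ((PQaux ν v n).1).natDegree = n ∧
      ((PQaux ν v n).2).Monic ∧ ((PQaux ν v n).2).natDegree = n ∧
      R (2 * n) = ((PQaux ν v n).1).comp (X ^ 2) ∧
      R (2 * n + 1) = (X - C ν) * ((PQaux ν v n).2).comp (X ^ 2) := by
    intro n
    induction n with
    | zero => simp [PQaux, hR0, hR1]
    | succ n ih =>
      obtain ⟨hPm, hPd, hQm, hQd, hRe, hRo⟩ := ih
      set p := (PQaux ν v n).1 with hp
      set q := (PQaux ν v n).2 with hq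
      have hPQ : PQaux ν v (n+1) =
          ((X - C (ν^2)) * q - C (v (2*n+1)) * p,
           ((X - C (ν^2)) * q - C (v (2*n+1)) * p) - C (v (2*n+2)) * q) := by
        rw [PQaux]
      have hXQm : ((X - C (ν^2)) * q).Monic := (monic_X_sub_C _).mul hQm
      have hXQd : ((X - C (ν^2)) * q).natDegree = n + 1 := by
        rw [(monic_X_sub_C (ν^2)).natDegree_mul hQm, natDegree_X_sub_C, hQd, add_comm]
      have hlt1 : (C (v (2*n+1)) * p).natDegree < ((X - C (ν^2)) * q).natDegree := by
        rw [hXQd]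
        calc (C (v (2*n+1)) * p).natDegree ≤ p.natDegree := natDegree_C_mul_le _ _
          _ = n := hPd
          _ < n + 1 := Nat.lt_succ_self n
      obtain ⟨hP'm, hP'd⟩ := monic_sub_aux hXQm hlt1
      rw [hXQd] at hP'd
      have hlt2 : (C (v (2*n+2)) * q).natDegree <
          ((X - C (ν^2)) * q - C (v (2*n+1)) * p).natDegree := by
        rw [hP'd]
        calc (C (v (2*n+2)) * q).natDegree ≤ q.natDegree := natDegree_C_mul_le _ _
          _ = n := hQd
          _ < n + 1 := Nat.lt_succ_self n
      obtain ⟨hQ'm, hQ'd⟩ := monic_sub_aux hP'm hlt2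
      rw [hP'd] at hQ'd
      -- recurrence steps
      have hre : R (2 * (n+1)) = (X + C ν) * R (2*n+1) - C (v (2*n+1)) * R (2*n) := by
        have h := hRrec (2*n+1) (Nat.le_add_left 1 (2*n))
        have hpow : ((-1 : ℝ)) ^ (2*n+1) = -1 := by
          rw [pow_succ, pow_mul]; norm_num
        rw [hpow] at h
        rw [show 2 * (n+1) = (2*n+1) + 1 by ring, h]
        simp only [neg_one_mul, map_neg, sub_neg_eq_add]
        rfl
      have hro : R (2 * (n+1) + 1) = (X - C ν) * R (2*(n+1)) - C (v (2*n+2)) * R (2*n+1) := by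
        have h := hRrec (2*n+2) (Nat.le_add_left 1 (2*n+1))
        have hpow : ((-1 : ℝ)) ^ (2*n+2) = 1 := by
          rw [pow_add, pow_mul]; norm_num
        rw [hpow, one_mul] at h
        rw [show 2 * (n+1) + 1 = (2*n+2) + 1 by ring, h,
          show 2 * (n+1) = 2*n+2 by ring]
        rfl
      refine ⟨by rw [hPQ]; exact hP'm, by rw [hPQ]; exact hP'd,
              by rw [hPQ]; exact hQ'm, by rw [hPQ]; exact hQ'd, ?_, ?_⟩
      · rw [hre, hRe, hRo, hPQ]
        simp only [sub_comp, mul_comp, X_comp, C_comp]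
        simp only [C_pow]
        ring
      · rw [hro, hre, hRe, hRo, hPQ]
        simp only [sub_comp, mul_comp, X_comp, C_comp]
        simp only [C_pow]
        ring
  exact key
end

section
/- With $R_n$, $P_n$, $Q_n$ as in the quadratic-mapping decomposition ($R_{2n}(x)=P_n(x^2)$, $R_{2n+1}(x)=(x-\nu)Q_n(x^2)$, where $R_{n+1}(x) = (x-(-1)^n\nu)R_n(x) - v_n R_{n-1}(x)$), the polynomials $P_n$ satisfy the three-term recurrence $P_{n+1}(x) + (v_{2n} + v_{2n+1} + \nu^2)P_n(x) + v_{2n}v_{2n-1}P_{n-1}(x) = x P_n(x)$ for $n \geq 1$. -/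
open Polynomial

lemma comp_X_sq_injective : Function.Injective (fun p : Polynomial ℝ => p.comp (X ^ 2)) := by
  intro p q h
  have hsub : (p - q).comp (X ^ 2) = 0 := by
    simp only [sub_comp]
    simpa using sub_eq_zero.mpr h
  rw [Polynomial.comp_eq_zero_iff] at hsub
  rcases hsub with h0 | ⟨_, hC⟩
  · exact sub_eq_zero.mp h0
  · exfalso
    have : ((X : Polynomial ℝ) ^ 2).natDegree = 2 := by simp
    rw [hC] at this
    simp at this

/-- The even part `Pₙ` of the quadratic-mapping decomposition satisfies the three-term
recurrence `P_{n+1} + (v_{2n} + v_{2n+1} + ν²) Pₙ + v_{2n} v_{2n-1} P_{n-1} = x Pₙ`. -/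
theorem quadratic_mapping_P_recurrence (ν : ℝ) (v : ℕ → ℝ)
    (R P Q : ℕ → Polynomial ℝ)
    (hR0 : R 0 = 1) (hR1 : R 1 = X - C ν)
    (hRrec : ∀ n : ℕ, 1 ≤ n →
      R (n + 1) = (X - C ((-1 : ℝ) ^ n * ν)) * R n - C (v n) * R (n - 1))
    (hP : ∀ n : ℕ, R (2 * n) = (P n).comp (X ^ 2))
    (hQ : ∀ n : ℕ, R (2 * n + 1) = (X - C ν) * (Q n).comp (X ^ 2)) :
    ∀ n : ℕ, 1 ≤ n →
      P (n + 1) + C (v (2 * n) + v (2 * n + 1) + ν ^ 2) * P n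
        + C (v (2 * n) * v (2 * n - 1)) * P (n - 1) = X * P n := by
  intro n hn
  obtain ⟨m, rfl⟩ : ∃ m, n = m + 1 := ⟨n - 1, (Nat.succ_pred_eq_of_pos hn).symm⟩
  have e1 := hRrec (2 * m + 3) (by omega)
  have e2 := hRrec (2 * m + 2) (by omega)
  have e3 := hRrec (2 * m + 1) (by omega)
  have p1 : ((-1 : ℝ)) ^ (2 * m + 3) = -1 := Odd.neg_one_pow ⟨m + 1, by ring⟩
  have p2 : ((-1 : ℝ)) ^ (2 * m + 2) = 1 := Even.neg_one_pow ⟨m + 1, by ring⟩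
  have p3 : ((-1 : ℝ)) ^ (2 * m + 1) = -1 := Odd.neg_one_pow ⟨m, by ring⟩
  rw [p1] at e1; rw [p2] at e2; rw [p3] at e3
  have hA : R (2 * m + 3 + 1) = (P (m + 2)).comp (X ^ 2) := by
    have h := hP (m + 2); rwa [show 2 * (m + 2) = 2 * m + 3 + 1 from by ring] at h
  have hB : R (2 * m + 2) = (P (m + 1)).comp (X ^ 2) := by
    have h := hP (m + 1); rwa [show 2 * (m + 1) = 2 * m + 2 from by ring] at h
  have hCc : R (2 * m) = (P m).comp (X ^ 2) := hP m
  have hD : R (2 * m + 3) = (X - C ν) * (Q (m + 1)).comp (X ^ 2) := by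
    have h := hQ (m + 1); rwa [show 2 * (m + 1) + 1 = 2 * m + 3 from by ring] at h
  have hE : R (2 * m + 1) = (X - C ν) * (Q m).comp (X ^ 2) := hQ m
  rw [hA, hD, show (2 * m + 3 - 1) = 2 * m + 2 from rfl, hB] at e1
  rw [show (2 * m + 2 + 1) = 2 * m + 3 from rfl, hD,
    show (2 * m + 2 - 1) = 2 * m + 1 from rfl, hB, hE] at e2
  rw [show (2 * m + 1 + 1) = 2 * m + 2 from rfl, hB,
    show (2 * m + 1 - 1) = 2 * m from rfl, hE, hCc] at e3
  apply comp_X_sq_injective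
  simp only [show (m + 1 + 1) = m + 2 from rfl, show (m + 1 - 1) = m from rfl,
    show (2 * (m + 1)) = 2 * m + 2 from by ring, show (2 * (m + 1) + 1) = 2 * m + 3 from by ring,
    show (2 * (m + 1) - 1) = 2 * m + 1 from by omega]
  simp only [add_comp, mul_comp, C_comp, X_comp]
  have cneg : C (-1 * ν) = (- C ν : Polynomial ℝ) := by simp
  rw [cneg] at e1 e3
  simp only [show (2 * m + 2 + 1) = 2 * m + 3 from rfl, show (2 * m + 2 - 1) = 2 * m + 1 from rfl,
    map_add, map_mul, map_pow, one_mul] at e1 e2 e3 ⊢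
  linear_combination e1 + (X + C ν) * e2 + C (v (2 * m + 2)) * e3
end

section
/- With $R_n$, $P_n$, $Q_n$ as in the quadratic-mapping decomposition, the polynomials $Q_n$ satisfy the three-term recurrence $Q_{n+1}(x) + (v_{2n+2} + v_{2n+1} + \nu^2)Q_n(x) + v_{2n}v_{2n+1}Q_{n-1}(x) = x Q_n(x)$ for $n \geq 1$, and moreover $Q_n$ is the Christoffel transform of $P_n$: $(x - \nu^2) Q_n(x) = P_{n+1}(x) + v_{2n+1} P_n(x)$, while $P_n(x) = Q_n(x) + v_{2n} Q_{n-1}(x)$. -/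
open Polynomial

private lemma comp_X_sq_inj {p q : Polynomial ℝ} (h : p.comp (X ^ 2) = q.comp (X ^ 2)) :
    p = q := by
  have h2 : (p - q).comp (X ^ 2) = 0 := by rw [sub_comp, h, sub_self]
  rcases (comp_eq_zero_iff).mp h2 with h3 | ⟨_, h4⟩
  · exact sub_eq_zero.mp h3
  · exfalso
    have := congrArg natDegree h4
    simp [natDegree_X_pow] at this

/-- The odd part `Qₙ` of the quadratic-mapping decomposition satisfies a three-term recurrence;
moreover `Qₙ` is the Christoffel transform of `Pₙ` and `Pₙ` the Geronimus transform of `Qₙ`. -/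
theorem quadratic_mapping_Q_recurrence_and_transforms (ν : ℝ) (v : ℕ → ℝ)
    (R P Q : ℕ → Polynomial ℝ)
    (hR0 : R 0 = 1) (hR1 : R 1 = X - C ν)
    (hRrec : ∀ n : ℕ, 1 ≤ n →
      R (n + 1) = (X - C ((-1 : ℝ) ^ n * ν)) * R n - C (v n) * R (n - 1))
    (hP : ∀ n : ℕ, R (2 * n) = (P n).comp (X ^ 2))
    (hQ : ∀ n : ℕ, R (2 * n + 1) = (X - C ν) * (Q n).comp (X ^ 2)) :
    (∀ n : ℕ, 1 ≤ n →
      Q (n + 1) + C (v (2 * n + 2) + v (2 * n + 1) + ν ^ 2) * Q n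
        + C (v (2 * n) * v (2 * n + 1)) * Q (n - 1) = X * Q n) ∧
    (∀ n : ℕ, (X - C (ν ^ 2)) * Q n = P (n + 1) + C (v (2 * n + 1)) * P n) ∧
    (∀ n : ℕ, 1 ≤ n → P n = Q n + C (v (2 * n)) * Q (n - 1)) := by
  have key2 : ∀ n : ℕ, (X - C (ν ^ 2)) * Q n = P (n + 1) + C (v (2 * n + 1)) * P n := by
    intro n
    have h1 := hRrec (2 * n + 1) (by omega)
    have e1 : 2 * n + 1 + 1 = 2 * (n + 1) := by ring
    have e2 : 2 * n + 1 - 1 = 2 * n := by omega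
    have e3 : ((-1 : ℝ)) ^ (2 * n + 1) = -1 := by
      rw [pow_succ, pow_mul]; norm_num
    rw [e1, e2, e3, hP, hP, hQ] at h1
    apply comp_X_sq_inj
    simp only [mul_comp, add_comp, sub_comp, X_comp, C_comp]
    rw [h1]
    simp only [C_neg, C_mul, C_pow, map_neg, map_one, neg_mul, one_mul]
    ring
  have key3 : ∀ n : ℕ, 1 ≤ n → P n = Q n + C (v (2 * n)) * Q (n - 1) := by
    intro n hn
    have h1 := hRrec (2 * n) (by omega)
    have e2 : 2 * n - 1 = 2 * (n - 1) + 1 := by omega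
    have e3 : ((-1 : ℝ)) ^ (2 * n) = 1 := by
      rw [pow_mul]; norm_num
    rw [e2, e3, hQ, hP, hQ] at h1
    apply comp_X_sq_inj
    apply mul_left_cancel₀ (X_sub_C_ne_zero ν)
    simp only [one_mul] at h1
    simp only [mul_comp, add_comp, C_comp]
    linear_combination -h1
  refine ⟨?_, key2, key3⟩
  intro n hn
  have a := key2 n
  have b := key3 n hn
  have c := key3 (n + 1) (by omega)
  have e1 : 2 * (n + 1) = 2 * n + 2 := by ring
  have e2 : n + 1 - 1 = n := rfl
  rw [e1, e2] at c
  simp only [C_add, C_mul, C_pow] at *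
  linear_combination -a - c - C (v (2 * n + 1)) * b
end

section
/- Let $\rho$ be a linear functional with moments $r_n = \langle\rho, x^n\rangle$, $r_0 = 1$, orthogonalizing the polynomials $R_n$ satisfying $R_{n+1}(x) + (-1)^n\nu R_n(x) + v_n R_{n-1}(x) = x R_n(x)$ with all $v_n > 0$. Then $r_{2n+1} = \nu\, r_{2n}$ for all $n \geq 0$. -/
open Polynomial

/-- For the orthogonality functional `ρ` of the generalized symmetric polynomials `Rₙ`
with recurrence `R_{n+1} + (-1)ⁿ ν Rₙ + vₙ R_{n-1} = x Rₙ`, `vₙ > 0`, the moments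
`rₙ = ⟨ρ, xⁿ⟩`, `r₀ = 1`, satisfy `r_{2n+1} = ν r_{2n}`. -/
theorem moments_odd_even_relation (ν : ℝ) (v : ℕ → ℝ) (hv : ∀ n : ℕ, 1 ≤ n → v n > 0)
    (R : ℕ → Polynomial ℝ)
    (hR0 : R 0 = 1) (hR1 : R 1 = X - C ν)
    (hRrec : ∀ n : ℕ, 1 ≤ n →
      R (n + 1) = (X - C ((-1 : ℝ) ^ n * ν)) * R n - C (v n) * R (n - 1))
    (ρ : Polynomial ℝ →ₗ[ℝ] ℝ) (hρ0 : ρ 1 = 1)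
    (horth : ∀ n m : ℕ, n ≠ m → ρ (R n * R m) = 0) :
    ∀ n : ℕ, ρ (X ^ (2 * n + 1)) = ν * ρ (X ^ (2 * n)) := by
  -- multiplication by X in terms of the basis
  have hXR : ∀ j : ℕ, X * R j = R (j+1) + C ((-1:ℝ)^j * ν) * R j
      + (if j = 0 then 0 else C (v j) * R (j-1)) := by
    intro j
    match j with
    | 0 =>
      simp only [if_pos rfl, hR0, hR1, pow_zero, one_mul, mul_one, add_zero]
      ring_nf
      simp
    | j+1 =>
      rw [hRrec (j+1) (by omega)]
      simp only [if_neg (Nat.succ_ne_zero j), Nat.add_sub_cancel, pow_succ,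
        map_mul, map_neg, map_one]
      ring
  -- recurrence for moments against R
  have harec : ∀ k n : ℕ, ρ (X ^ (k+1) * R n) = ρ (X ^ k * R (n+1))
      + (-1:ℝ)^n * ν * ρ (X ^ k * R n)
      + (if n = 0 then 0 else v n * ρ (X ^ k * R (n-1))) := by
    intro k n
    have h1 : X ^ (k+1) * R n = X ^ k * R (n+1)
        + ((-1:ℝ)^n * ν) • (X ^ k * R n)
        + (if n = 0 then (0 : Polynomial ℝ) else (v n) • (X ^ k * R (n-1))) := by
      rw [pow_succ, mul_assoc, hXR n]
      split_ifs with h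
      · simp only [smul_eq_C_mul, add_zero]
        ring
      · simp only [smul_eq_C_mul]
        ring
    rw [h1]
    split_ifs with h
    · simp [map_add, map_smul]
    · simp [map_add, map_smul]
  -- the odd step, conditional on the even parity vanishing at level n
  have hodd : ∀ n : ℕ, (∀ m : ℕ, ρ (X ^ (2*n) * R (2*m+1)) = 0) →
      ∀ m : ℕ, ρ (X ^ (2*n+1) * R (2*m)) = ν * ρ (X ^ (2*n) * R (2*m)) := by
    intro n hEn m
    rw [harec (2*n) (2*m)]
    have hpow : ((-1:ℝ))^(2*m) = 1 := by
      rw [pow_mul]; norm_num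
    rcases Nat.eq_zero_or_pos m with hm | hm
    · subst hm
      simp only [Nat.mul_zero, if_pos rfl, add_zero, hpow, one_mul]
      rw [show (2*0 : ℕ) = 0 by norm_num] at *
      have := hEn 0
      rw [show (2*0+1 : ℕ) = 0 + 1 by norm_num] at this
      rw [this]
      ring_nf
      simp
    · have h2m : (2*m : ℕ) ≠ 0 := by omega
      rw [if_neg h2m, hpow]
      have h1 : ρ (X ^ (2*n) * R (2*m+1)) = 0 := hEn m
      have h2 : ρ (X ^ (2*n) * R (2*m-1)) = 0 := by
        have := hEn (m-1)
        rwa [show 2*(m-1)+1 = 2*m-1 by omega] at this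
      rw [h1, h2]
      ring
  -- the key parity vanishing, by induction
  have hE : ∀ n : ℕ, ∀ m : ℕ, ρ (X ^ (2*n) * R (2*m+1)) = 0 := by
    intro n
    induction n with
    | zero =>
      intro m
      have h : X ^ (2*0) * R (2*m+1) = R (2*m+1) * R 0 := by
        simp [hR0]
      rw [h, horth _ 0 (by omega)]
    | succ n ih =>
      intro m
      have hO := hodd n ih
      have hstep : ρ (X ^ (2*(n+1)) * R (2*m+1)) = ρ (X ^ (2*n+1) * R (2*m+2))
          + (-1:ℝ)^(2*m+1) * ν * ρ (X ^ (2*n+1) * R (2*m+1))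
          + v (2*m+1) * ρ (X ^ (2*n+1) * R (2*m)) := by
        have := harec (2*n+1) (2*m+1)
        rw [show 2*(n+1) = (2*n+1)+1 by ring, this,
          if_neg (by omega : (2*m+1 : ℕ) ≠ 0)]
        norm_num
      rw [hstep]
      have hpow : ((-1:ℝ))^(2*m+1) = -1 := by
        rw [pow_succ, pow_mul]; norm_num
      have hA : ρ (X ^ (2*n+1) * R (2*m+2)) = ν * ρ (X ^ (2*n) * R (2*m+2)) := by
        have := hO (m+1)
        rwa [show 2*(m+1) = 2*m+2 by ring] at this
      have hB : ρ (X ^ (2*n+1) * R (2*m)) = ν * ρ (X ^ (2*n) * R (2*m)) := hO m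
      have hC : ρ (X ^ (2*n+1) * R (2*m+1)) = ρ (X ^ (2*n) * R (2*m+2))
          + v (2*m+1) * ρ (X ^ (2*n) * R (2*m)) := by
        have h := harec (2*n) (2*m+1)
        rw [if_neg (by omega : (2*m+1 : ℕ) ≠ 0),
          show (2*m+1+1) = 2*m+2 by ring,
          show (2*m+1-1 : ℕ) = 2*m by omega, ih m] at h
        rw [h]; ring
      rw [hA, hB, hC, hpow]
      ring
  -- conclude
  intro n
  have h0 : ∀ k : ℕ, ρ (X ^ k) = ρ (X ^ k * R 0) := by
    intro k; rw [hR0, mul_one]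
  rw [h0, h0]
  have := hodd n (hE n) 0
  rwa [show (2*0 : ℕ) = 0 by norm_num] at this
end

section
/- Let $X, Y, Z$ be elements of an associative algebra satisfying $XY+YX = Z + \omega_3$, $YZ+ZY = \omega_1$, $ZX+XZ = 4Y + \omega_2$ (where $\omega_1, \omega_2, \omega_3$ are scalars). Then $Q = Z^2 + 4Y^2$ commutes with each of $X$, $Y$, $Z$. -/
/-- In the `q = -1` Askey–Wilson (anticommutator) algebra, `Q = Z² + 4Y²` is a Casimir
element: it commutes with `X`, `Y`, `Z`. -/
theorem q_minus_one_AW3_casimir {A : Type*} [Ring A] [Algebra ℝ A]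
    (X Y Z : A) (ω₁ ω₂ ω₃ : ℝ)
    (h3 : X * Y + Y * X = Z + algebraMap ℝ A ω₃)
    (h1 : Y * Z + Z * Y = algebraMap ℝ A ω₁)
    (h2 : Z * X + X * Z = 4 * Y + algebraMap ℝ A ω₂) :
    Commute (Z ^ 2 + 4 * Y ^ 2) X ∧ Commute (Z ^ 2 + 4 * Y ^ 2) Y ∧
      Commute (Z ^ 2 + 4 * Y ^ 2) Z := by
  have hc1Z := Algebra.commutes ω₁ Z
  have hc1Y := Algebra.commutes ω₁ Y
  have hc2Z := Algebra.commutes ω₂ Z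
  have hc3Y := Algebra.commutes ω₃ Y
  refine ⟨?_, ?_, ?_⟩
  · show (Z ^ 2 + 4 * Y ^ 2) * X = X * (Z ^ 2 + 4 * Y ^ 2)
    rw [← sub_eq_zero]
    calc (Z ^ 2 + 4 * Y ^ 2) * X - X * (Z ^ 2 + 4 * Y ^ 2)
        = Z * (Z * X + X * Z) - (Z * X + X * Z) * Z
          + 4 * (Y * (X * Y + Y * X) - (X * Y + Y * X) * Y) := by noncomm_ring
      _ = Z * (4 * Y + algebraMap ℝ A ω₂) - (4 * Y + algebraMap ℝ A ω₂) * Z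
          + 4 * (Y * (Z + algebraMap ℝ A ω₃) - (Z + algebraMap ℝ A ω₃) * Y) := by
            rw [h2, h3]
      _ = Z * algebraMap ℝ A ω₂ - algebraMap ℝ A ω₂ * Z
          + 4 * (Y * algebraMap ℝ A ω₃ - algebraMap ℝ A ω₃ * Y) := by noncomm_ring
      _ = 0 := by rw [hc2Z, hc3Y]; noncomm_ring
  · show (Z ^ 2 + 4 * Y ^ 2) * Y = Y * (Z ^ 2 + 4 * Y ^ 2)
    rw [← sub_eq_zero]
    calc (Z ^ 2 + 4 * Y ^ 2) * Y - Y * (Z ^ 2 + 4 * Y ^ 2)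
        = Z * (Y * Z + Z * Y) - (Y * Z + Z * Y) * Z := by noncomm_ring
      _ = Z * algebraMap ℝ A ω₁ - algebraMap ℝ A ω₁ * Z := by rw [h1]
      _ = 0 := by rw [hc1Z]; noncomm_ring
  · show (Z ^ 2 + 4 * Y ^ 2) * Z = Z * (Z ^ 2 + 4 * Y ^ 2)
    rw [← sub_eq_zero]
    calc (Z ^ 2 + 4 * Y ^ 2) * Z - Z * (Z ^ 2 + 4 * Y ^ 2)
        = 4 * (Y * (Y * Z + Z * Y) - (Y * Z + Z * Y) * Y) := by noncomm_ring
      _ = 4 * (Y * algebraMap ℝ A ω₁ - algebraMap ℝ A ω₁ * Y) := by rw [h1]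
      _ = 0 := by rw [hc1Y]; noncomm_ring
end

section
/- With $X = L_0 + (\alpha+\beta+1)I$, $Y = x$ (multiplication), $Zf(x) = -\frac{2}{x}(cf(x) + (x-1)(x+c)f(-x))$ as above, for every polynomial $f$ and $x \neq 0$: $(XY+YX)f(x) = Zf(x) + 2(\beta - \alpha c)f(x)$. -/
open Polynomial

/-- The anticommutation relation `XY + YX = Z + 2(β - αc)` in the Dunkl-operator realization,
verified on polynomials: here `X = L₀ + (α+β+1)I`, `Y` is multiplication by `x`. -/
theorem XY_anticommutator (α β c : ℝ)
    (L0 Xop Zop : (ℝ → ℝ) → (ℝ → ℝ))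
    (hL0 : ∀ f : ℝ → ℝ, ∀ x : ℝ, x ≠ 0 →
      L0 f x = (((α + β + 1) * x ^ 2 + (c * α - β) * x + c) / x ^ 2) * (f (-x) - f x)
        - (2 * (x - 1) * (x + c) / x) * deriv f (-x))
    (hX : ∀ f : ℝ → ℝ, ∀ x : ℝ, Xop f x = L0 f x + (α + β + 1) * f x)
    (hZ : ∀ f : ℝ → ℝ, ∀ x : ℝ, x ≠ 0 →
      Zop f x = -(2 / x) * (c * f x + (x - 1) * (x + c) * f (-x))) :
    ∀ p : Polynomial ℝ, ∀ x : ℝ, x ≠ 0 →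
      Xop (fun t => t * p.eval t) x + x * Xop (fun t => p.eval t) x
        = Zop (fun t => p.eval t) x + 2 * (β - α * c) * p.eval x := by
  intro p x hx
  have hd1 : deriv (fun t : ℝ => t * p.eval t) (-x)
      = p.eval (-x) + (-x) * p.derivative.eval (-x) := by
    have : (fun t : ℝ => t * p.eval t) = fun t : ℝ => (X * p).eval t := by
      funext t; simp
    rw [this, Polynomial.deriv, derivative_mul]
    simp
  have hd2 : deriv (fun t : ℝ => p.eval t) (-x) = p.derivative.eval (-x) := by
    simp [Polynomial.deriv]
  rw [hX, hX, hL0 _ _ hx, hL0 _ _ hx, hZ _ _ hx, hd1, hd2]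
  field_simp
  ring
end

section
/- With $Y$ multiplication by $x$ and $Zf(x) = -\frac{2}{x}(cf(x) + (x-1)(x+c)f(-x))$, for every function $f$ and $x \neq 0$: $(Z^2 + 4Y^2)f(x) = 4(c^2+1)f(x)$. -/
/-- The Casimir `Q = Z² + 4Y²` takes the constant value `4(c²+1)` in the big -1 Jacobi
realization: `Z(Zf)(x) + 4x² f(x) = 4(c²+1) f(x)` for all `x ≠ 0`. -/
theorem casimir_value (c : ℝ)
    (Zop : (ℝ → ℝ) → (ℝ → ℝ))
    (hZ : ∀ f : ℝ → ℝ, ∀ x : ℝ, x ≠ 0 →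
      Zop f x = -(2 / x) * (c * f x + (x - 1) * (x + c) * f (-x))) :
    ∀ f : ℝ → ℝ, ∀ x : ℝ, x ≠ 0 →
      Zop (Zop f) x + 4 * x ^ 2 * f x = 4 * (c ^ 2 + 1) * f x := by
  intro f x hx
  have hnx : -x ≠ 0 := neg_ne_zero.mpr hx
  rw [hZ (Zop f) x hx, hZ f x hx, hZ f (-x) hnx]
  field_simp
  ring
end

section
/- Define the polynomial basis $\phi_{2n}(x) = (x^2-1)^n$ and $\phi_{2n+1}(x) = (x-1)(x^2-1)^n$, and let $L_0$ be the big $-1$ Jacobi operator as above. Then for all $n \geq 1$ and $x \neq 0$: $L_0\phi_n(x) = \lambda_n \phi_n(x) + \eta_n \phi_{n-1}(x)$, where $\lambda_n = 2n$, $\eta_n = 2n(c-1)$ for $n$ even, and $\lambda_n = -2(\alpha+\beta+n+1)$, $\eta_n = -2(c+1)(\alpha+n)$ for $n$ odd. -/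
private lemma hasDerivAt_even_phi (m : ℕ) (y : ℝ) :
    HasDerivAt (fun t : ℝ => (t ^ 2 - 1) ^ m)
      ((m : ℝ) * (y ^ 2 - 1) ^ (m - 1) * (2 * y)) y := by
  have h : HasDerivAt (fun t : ℝ => t ^ 2 - 1) (2 * y) y := by
    simpa using (hasDerivAt_pow 2 y).sub_const 1
  simpa using h.fun_pow m

private lemma hasDerivAt_odd_phi (m : ℕ) (y : ℝ) :
    HasDerivAt (fun t : ℝ => (t - 1) * (t ^ 2 - 1) ^ m)
      ((y ^ 2 - 1) ^ m + (y - 1) * ((m : ℝ) * (y ^ 2 - 1) ^ (m - 1) * (2 * y))) y := by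
  have h1 : HasDerivAt (fun t : ℝ => t - 1) 1 y := (hasDerivAt_id y).sub_const 1
  simpa using h1.fun_mul (hasDerivAt_even_phi m y)

/-- The operator `L₀` is lower bidiagonal in the basis `φ_{2n}(x) = (x²-1)ⁿ`,
`φ_{2n+1}(x) = (x-1)(x²-1)ⁿ`:  `L₀ φₙ = λₙ φₙ + ηₙ φ_{n-1}`. -/
theorem L0_two_diagonal (α β c : ℝ)
    (φ : ℕ → ℝ → ℝ)
    (hφeven : ∀ m : ℕ, ∀ x : ℝ, φ (2 * m) x = (x ^ 2 - 1) ^ m)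
    (hφodd : ∀ m : ℕ, ∀ x : ℝ, φ (2 * m + 1) x = (x - 1) * (x ^ 2 - 1) ^ m)
    (lam eta : ℕ → ℝ)
    (hlam : ∀ n : ℕ, lam n = if Even n then (2 * n : ℝ) else -2 * (α + β + n + 1))
    (heta : ∀ n : ℕ, eta n = if Even n then 2 * n * (c - 1) else -2 * (c + 1) * (α + n)) :
    ∀ n : ℕ, 1 ≤ n → ∀ x : ℝ, x ≠ 0 →
      (((α + β + 1) * x ^ 2 + (c * α - β) * x + c) / x ^ 2) * (φ n (-x) - φ n x)
        - (2 * (x - 1) * (x + c) / x) * deriv (φ n) (-x)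
        = lam n * φ n x + eta n * φ (n - 1) x := by
  intro n hn x hx
  obtain ⟨m, hm | hm⟩ := Nat.even_or_odd' n
  · -- n = 2m, m ≥ 1
    subst hm
    obtain ⟨k, rfl⟩ : ∃ k, m = k + 1 := ⟨m - 1, by omega⟩
    have hφ : φ (2 * (k + 1)) = fun t : ℝ => (t ^ 2 - 1) ^ (k + 1) :=
      funext (hφeven (k + 1))
    have hidx : 2 * (k + 1) - 1 = 2 * k + 1 := by omega
    rw [hφ, (hasDerivAt_even_phi (k + 1) (-x)).deriv, hidx, hφodd k x,
      hlam, heta]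
    simp only [Nat.add_sub_cancel, if_pos (even_two_mul (k + 1)), neg_sq]
    push_cast
    field_simp
    ring
  · -- n = 2m + 1
    subst hm
    have hφ : φ (2 * m + 1) = fun t : ℝ => (t - 1) * (t ^ 2 - 1) ^ m :=
      funext (hφodd m)
    have hodd : ¬ Even (2 * m + 1) := by simp [parity_simps]
    rw [hφ, (hasDerivAt_odd_phi m (-x)).deriv, Nat.add_sub_cancel, hφeven m x,
      hlam, heta, if_neg hodd, if_neg hodd]
    rcases m with _ | k
    · push_cast
      field_simp
      ring
    · simp only [Nat.add_sub_cancel, neg_sq]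
      push_cast
      field_simp
      ring
end

section
/- Let $(\lambda_n)$ be given by $\lambda_n = 2n$ for $n$ even and $\lambda_n = -2(\alpha+\beta+n+1)$ for $n$ odd, and let $(\eta_n)$ be nonzero scalars. Suppose a sequence of polynomials $\phi_0, \phi_1, \ldots$ with $\deg\phi_k = k$ satisfies $L\phi_n = \lambda_n\phi_n + \eta_n\phi_{n-1}$ for a linear operator $L$. If all $\lambda_n$ are pairwise distinct, then for each $n$ the polynomial $P_n = \sum_{s=0}^n A_{ns}\phi_s$ with $A_{ns} = \frac{(\lambda_n-\lambda_0)(\lambda_n-\lambda_1)\cdots(\lambda_n-\lambda_{s-1})}{\eta_1\eta_2\cdots\eta_s}$ (and $A_{n0}=1$) satisfies $LP_n = \lambda_n P_n$. -/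
open Finset Polynomial

/-- Explicit eigenpolynomials of a lower bidiagonal operator: if `L φₙ = λₙ φₙ + ηₙ φ_{n-1}`
with pairwise distinct `λₙ`, then `Pₙ = ∑_{s=0}^{n} A_{ns} φ_s` with
`A_{ns} = ∏_{i<s}(λₙ - λᵢ) / ∏_{i<s} η_{i+1}` satisfies `L Pₙ = λₙ Pₙ`. -/
theorem bidiagonal_eigenpolynomials (α β : ℝ)
    (lam : ℕ → ℝ)
    (hlam : ∀ n : ℕ, lam n = if Even n then (2 * n : ℝ) else -2 * (α + β + n + 1))
    (hdist : ∀ m n : ℕ, m ≠ n → lam m ≠ lam n)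
    (eta : ℕ → ℝ) (heta : ∀ n : ℕ, 1 ≤ n → eta n ≠ 0)
    (L : Polynomial ℝ →ₗ[ℝ] Polynomial ℝ)
    (φ : ℕ → Polynomial ℝ) (hdeg : ∀ k : ℕ, (φ k).natDegree = k)
    (hL0 : L (φ 0) = lam 0 • φ 0)
    (hLφ : ∀ n : ℕ, 1 ≤ n → L (φ n) = lam n • φ n + eta n • φ (n - 1)) :
    ∀ n : ℕ,
      L (∑ s ∈ Finset.range (n + 1),
            ((∏ i ∈ Finset.range s, (lam n - lam i)) /
              (∏ i ∈ Finset.range s, eta (i + 1))) • φ s)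
        = lam n • (∑ s ∈ Finset.range (n + 1),
            ((∏ i ∈ Finset.range s, (lam n - lam i)) /
              (∏ i ∈ Finset.range s, eta (i + 1))) • φ s) := by
  intro n
  set A : ℕ → ℝ := fun s =>
    (∏ i ∈ Finset.range s, (lam n - lam i)) / (∏ i ∈ Finset.range s, eta (i + 1)) with hA
  -- key recurrence
  have hetaprod : ∀ s : ℕ, (∏ i ∈ Finset.range s, eta (i + 1)) ≠ 0 := by
    intro s
    exact Finset.prod_ne_zero_iff.2 fun i _ => heta (i + 1) (Nat.le_add_left 1 i)
  have key : ∀ s : ℕ, A (s + 1) * eta (s + 1) = A s * (lam n - lam s) := by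
    intro s
    have h1 : eta (s + 1) ≠ 0 := heta (s + 1) (Nat.le_add_left 1 s)
    have h2 := hetaprod s
    simp only [hA, Finset.prod_range_succ]
    field_simp
  have hLφ' : ∀ s : ℕ, L (φ s) =
      lam s • φ s + (if s = 0 then 0 else eta s • φ (s - 1)) := by
    intro s
    rcases Nat.eq_zero_or_pos s with h | h
    · subst h; simpa using hL0
    · rw [hLφ s h, if_neg (Nat.pos_iff_ne_zero.mp h)]
  show L (∑ s ∈ Finset.range (n + 1), A s • φ s) = lam n • ∑ s ∈ Finset.range (n + 1), A s • φ s
  rw [map_sum]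
  simp only [map_smul]
  have step : ∀ s ∈ Finset.range (n + 1),
      A s • L (φ s) = A s • (lam s • φ s) + (if s = 0 then 0 else (A s * eta s) • φ (s - 1)) := by
    intro s _
    rw [hLφ' s, smul_add]
    congr 1
    split_ifs with h
    · simp
    · rw [smul_smul]
  rw [Finset.sum_congr rfl step, Finset.sum_add_distrib]
  have hshift : (∑ s ∈ Finset.range (n + 1),
      (if s = 0 then 0 else (A s * eta s) • φ (s - 1)))
      = ∑ s ∈ Finset.range (n + 1), ((lam n - lam s) * A s) • φ s := by
    rw [Finset.sum_range_succ' (fun s => if s = 0 then (0 : Polynomial ℝ) else (A s * eta s) • φ (s - 1)) n]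
    simp only [if_neg (Nat.succ_ne_zero _), Nat.succ_sub_one, if_true, add_zero]
    rw [Finset.sum_range_succ (fun s => ((lam n - lam s) * A s) • φ s) n]
    have : ((lam n - lam n) * A n) • φ n = 0 := by simp
    rw [this, add_zero]
    apply Finset.sum_congr rfl
    intro s _
    rw [key s, mul_comm]
  rw [hshift, Finset.smul_sum, ← Finset.sum_add_distrib]
  apply Finset.sum_congr rfl
  intro s _
  rw [smul_smul, smul_smul, ← add_smul]
  congr 1
  ring
end
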